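/- arXiv:1610.10028 — 2 statements merged into one kernel-verified Lean document; each statement's English description precedes it below -/
import Mathlib

section
/- For fixed z > 0, the conditional type S error rate typeS(μ) = Φ(-z-μ) / (Φ(-z-μ) + 1 - Φ(z-μ)) satisfies typeS(0) = 1/2 and typeS(μ) < 1/2 for all μ > 0. -/
open MeasureTheory ProbabilityTheory Real Set Filter

noncomputable def Phi (x : ℝ) : ℝ := ((gaussianReal 0 1) (Set.Iic x)).toReal
noncomputable def PhiInv : ℝ → ℝ := Function.invFun Phi
noncomputable def phi (x : ℝ) : ℝ := Real.exp (-x^2/2) / Real.sqrt (2*Real.pi)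

/-!
By the symmetry `Φ(-x) = 1 - Φ(x)` the denominator of `typeS(μ)` is `Φ(-z-μ) + Φ(μ-z)`, so
`typeS(μ) < 1/2` just says `Φ(-z-μ) < Φ(μ-z)`, i.e. strict monotonicity of `Φ`, with equality at
`μ = 0`.
-/

section CDF

variable {μ : Measure ℝ}

lemma measureReal_Iic_strictMono [IsFiniteMeasure μ] [μ.IsOpenPosMeasure] :
    StrictMono fun x ↦ μ.real (Iic x) := by
  intro a b hab
  have hIoc : 0 < μ.real (Ioc a b) :=
    ENNReal.toReal_pos ((Measure.measure_Ioo_pos μ).mpr hab |>.trans_le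
      (measure_mono Ioo_subset_Ioc_self)).ne' (measure_ne_top _ _)
  show μ.real (Iic a) < μ.real (Iic b)
  rw [← Iic_union_Ioc_eq_Iic hab.le,
    measureReal_union (Iic_disjoint_Ioc le_rfl) measurableSet_Ioc]
  linarith

lemma measureReal_Iic_neg [IsProbabilityMeasure μ] [NullSingletonClass μ]
    (hμ : μ.map (fun x ↦ -x) = μ) (x : ℝ) :
    μ.real (Iic (-x)) = 1 - μ.real (Iic x) := by
  have hpre : Iic (-x) = (fun y : ℝ ↦ -y) ⁻¹' Ici x := by ext y; simp
  rw [hpre, ← map_measureReal_apply (by fun_prop) measurableSet_Ici, hμ, ← compl_Iio,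
    measureReal_compl measurableSet_Iio, measureReal_congr Iio_ae_eq_Iic, probReal_univ]

end CDF

lemma gaussianReal_std_map_neg : (gaussianReal 0 1).map (fun x ↦ -x) = gaussianReal 0 1 := by
  rw [gaussianReal_map_neg, neg_zero]

instance : (gaussianReal 0 1).IsOpenPosMeasure :=
  (gaussianReal_absolutelyContinuous' 0 one_ne_zero).isOpenPosMeasure

instance : NullSingletonClass (gaussianReal 0 1) :=
  nullSingletonClass_gaussianReal one_ne_zero

lemma Phi_strictMono : StrictMono Phi :=
  measureReal_Iic_strictMono (μ := gaussianReal 0 1)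

lemma Phi_neg (x : ℝ) : Phi (-x) = 1 - Phi x :=
  measureReal_Iic_neg gaussianReal_std_map_neg x

lemma Phi_pos (x : ℝ) : 0 < Phi x :=
  measureReal_nonneg.trans_lt (Phi_strictMono (sub_one_lt x))

theorem typeS_half_and_lt_general (z : ℝ) :
    Phi (-z - 0) / (Phi (-z - 0) + 1 - Phi (z - 0)) = 1/2 ∧
    ∀ μ : ℝ, 0 < μ →
      Phi (-z - μ) / (Phi (-z - μ) + 1 - Phi (z - μ)) < 1/2 := by
  constructor
  · have hpos := Phi_pos (-z)
    rw [sub_zero, sub_zero, add_sub_assoc, ← Phi_neg]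
    field_simp
    norm_num
  · intro μ hμ
    have hupper : 1 - Phi (z - μ) = Phi (μ - z) := by rw [← Phi_neg, neg_sub]
    have hlt : Phi (-z - μ) < Phi (μ - z) := Phi_strictMono (by linarith)
    have hpos := Phi_pos (-z - μ)
    rw [add_sub_assoc, hupper, div_lt_iff₀ (by linarith)]
    linarith

theorem typeS_half_and_lt (z : ℝ) (hz : 0 < z) :
    Phi (-z - 0) / (Phi (-z - 0) + 1 - Phi (z - 0)) = 1/2 ∧
    ∀ μ : ℝ, 0 < μ →
      Phi (-z - μ) / (Phi (-z - μ) + 1 - Phi (z - μ)) < 1/2 :=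
  typeS_half_and_lt_general z
end

section
/- If the power of the level-α two-sided test satisfies 1-β < 1/2 and the true effect is θ = 1 > 0, then the critical value c = τΦ⁻¹(1-α/2) satisfies c > 1; hence any rejection yields |θ̂| ≥ c > θ (overestimation of the magnitude). -/
open MeasureTheory ProbabilityTheory Real Set Filter

lemma gauss_singleton (a : ℝ) : (gaussianReal 0 1) {a} = 0 := by
  rw [gaussianReal_of_var_ne_zero 0 one_ne_zero,
    withDensity_apply _ (measurableSet_singleton a)]
  exact setLIntegral_measure_zero _ _ (measure_singleton a)

lemma Phi_zero : Phi 0 = 1/2 := by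
  have hmap : (gaussianReal 0 1).map (fun x => (-1 : ℝ) * x) = gaussianReal 0 1 := by
    rw [gaussianReal_map_const_mul (-1)]
    norm_num
  have h1 : (gaussianReal 0 1) (Set.Iic (0:ℝ)) = (gaussianReal 0 1) (Set.Ici (0:ℝ)) := by
    conv_lhs => rw [← hmap]
    rw [Measure.map_apply (by fun_prop) measurableSet_Iic]
    congr 1
    ext x
    simp only [Set.mem_preimage, Set.mem_Iic, Set.mem_Ici]
    constructor <;> intro h <;> nlinarith
  have h2 : (gaussianReal 0 1) (Set.Ici (0:ℝ)) = (gaussianReal 0 1) (Set.Ioi (0:ℝ)) := by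
    have : Set.Ici (0:ℝ) = {0} ∪ Set.Ioi 0 := by
      ext x; simp [le_iff_lt_or_eq, or_comm, eq_comm]
    rw [this, measure_union (by simp) measurableSet_Ioi, gauss_singleton, zero_add]
  have h3 : (gaussianReal 0 1) (Set.Iic (0:ℝ)) + (gaussianReal 0 1) (Set.Ioi (0:ℝ)) = 1 := by
    rw [← measure_union (by simp [Set.disjoint_left]) measurableSet_Ioi,
      Set.Iic_union_Ioi, measure_univ]
  rw [← h2, ← h1] at h3
  have := congrArg ENNReal.toReal h3
  rw [ENNReal.toReal_add (measure_ne_top _ _) (measure_ne_top _ _)] at this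
  unfold Phi
  simp only [ENNReal.toReal_one] at this
  linarith

lemma Phi_mono : Monotone Phi := by
  intro x y hxy
  exact ENNReal.toReal_mono (measure_ne_top _ _) (measure_mono (Set.Iic_subset_Iic.2 hxy))

lemma Phi_nonneg (x : ℝ) : 0 ≤ Phi x := ENNReal.toReal_nonneg

theorem low_power_forces_overestimation (α τ c : ℝ) (hα : α ∈ Set.Ioo (0:ℝ) 1)
    (hτ : 0 < τ) (hc : c = τ * PhiInv (1 - α/2))
    (hpow : Phi ((-c - 1)/τ) + 1 - Phi ((c - 1)/τ) < 1/2) :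
    1 < c := by
  by_contra h
  push_neg at h
  have hle : (c - 1)/τ ≤ 0 := div_nonpos_of_nonpos_of_nonneg (by linarith) hτ.le
  have := Phi_mono hle
  rw [Phi_zero] at this
  have := Phi_nonneg ((-c - 1)/τ)
  linarith
end
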